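/- Quantitative lower bound on Im f near the boundary of the disk. With Δ > 0, v > 0, T := tanh(Δ·π/(2v)), w(z) := 2z/(1+z²) and f(z) := (v/π)·Log((1 + T·w(z))/(1 − T·w(z))) for |z| < 1: there exists a constant c > 0 (depending only on Δ and v) such that for every ρ ∈ [0.9, 1) and every θ ∈ [0, π/2], Im f(ρ·e^{iθ}) ≥ c·(1 − ρ)·sin θ. -/

import Mathlib

/-!
Write `z = ρ e^{iθ}` and `T = tanh(Δπ/(2v))`. Clearing the denominator `1 + z²`, the argument of
the logarithm is `P / Q` with `P, Q = 1 + z² ± 2Tz`, so `Im f(z) = (v/π) arg (P Q̄)`. A direct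
computation gives `Im (P Q̄) = 4T(1 - ρ²) ρ sin θ ≥ 0`, while `|P Q̄| ≤ 16` on the closed unit disk,
and `arg ζ ≥ sin (arg ζ) = Im ζ / |ζ|` in the upper half plane. Since `ρ(1 + ρ) ≥ 1` for
`ρ ≥ 0.9`, this yields the bound with `c = vT/(4π)`.
-/

open ComplexConjugate

theorem Real.tanh_pos {x : ℝ} (hx : 0 < x) : 0 < Real.tanh x := by
  rw [Real.tanh_eq_sinh_div_cosh]
  exact div_pos (Real.sinh_pos_iff.2 hx) (Real.cosh_pos x)

namespace Complex

theorem arg_div_eq_arg_mul_conj (P Q : ℂ) : arg (P / Q) = arg (P * conj Q) := by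
  rcases eq_or_ne Q 0 with rfl | hQ
  · simp
  rw [div_eq_mul_inv, inv_def, ← mul_assoc,
    arg_mul_real (inv_pos.2 (normSq_pos.2 hQ))]

theorem im_div_le_arg {ζ : ℂ} {M : ℝ} (him : 0 ≤ ζ.im) (hM : ‖ζ‖ ≤ M) : ζ.im / M ≤ arg ζ := by
  rcases eq_or_ne ζ 0 with rfl | hζ
  · simp
  calc ζ.im / M ≤ ζ.im / ‖ζ‖ := div_le_div_of_nonneg_left him (norm_pos_iff.2 hζ) hM
    _ = Real.sin (arg ζ) := (sin_arg ζ).symm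
    _ ≤ arg ζ := Real.sin_le (arg_nonneg_iff.2 him)

end Complex

open Complex

theorem one_add_sq_ne_zero_of_norm_lt_one {z : ℂ} (hz : ‖z‖ < 1) : 1 + z ^ 2 ≠ 0 := by
  intro h
  have : ‖z ^ 2‖ = 1 := by rw [show z ^ 2 = -1 by linear_combination h, norm_neg, norm_one]
  rw [norm_pow] at this
  nlinarith [norm_nonneg z]

theorem one_add_mul_div_one_sub_mul_eq (T z : ℂ) (hz : 1 + z ^ 2 ≠ 0) :
    (1 + T * (2 * z / (1 + z ^ 2))) / (1 - T * (2 * z / (1 + z ^ 2))) =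
      (1 + z ^ 2 + 2 * T * z) / (1 + z ^ 2 - 2 * T * z) := by
  rw [← div_div_div_cancel_right₀ hz (1 + z ^ 2 + 2 * T * z)]
  congr 1 <;> field_simp

theorem im_mul_conj_one_add_sq_add_sub (T : ℝ) (z : ℂ) :
    ((1 + z ^ 2 + 2 * T * z) * conj (1 + z ^ 2 - 2 * T * z)).im =
      4 * T * (1 - ‖z‖ ^ 2) * z.im := by
  rw [← normSq_eq_norm_sq, normSq_apply]
  simp only [pow_two, mul_im, mul_re, add_re, add_im, sub_re, sub_im, conj_re, conj_im, one_re,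
    one_im, ofReal_re, ofReal_im, re_ofNat, im_ofNat]
  ring

theorem norm_one_add_sq_add_le {c z : ℂ} (hc : ‖c‖ ≤ 1) (hz : ‖z‖ ≤ 1) :
    ‖1 + z ^ 2 + 2 * c * z‖ ≤ 4 := by
  calc ‖1 + z ^ 2 + 2 * c * z‖ ≤ ‖(1 : ℂ)‖ + ‖z ^ 2‖ + ‖2 * c * z‖ := norm_add₃_le
    _ = 1 + ‖z‖ ^ 2 + 2 * ‖c‖ * ‖z‖ := by simp [norm_pow]
    _ ≤ 4 := by nlinarith [norm_nonneg z, norm_nonneg c]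

theorem norm_mul_conj_one_add_sq_add_sub_le {T : ℝ} {z : ℂ} (hT : |T| ≤ 1) (hz : ‖z‖ ≤ 1) :
    ‖(1 + z ^ 2 + 2 * T * z) * conj (1 + z ^ 2 - 2 * T * z)‖ ≤ 4 * 4 := by
  rw [norm_mul, RCLike.norm_conj, show 1 + z ^ 2 - 2 * T * z = 1 + z ^ 2 + 2 * ((-T : ℝ) : ℂ) * z by
    push_cast; ring]
  exact mul_le_mul (norm_one_add_sq_add_le (by rwa [norm_real]) hz)
    (norm_one_add_sq_add_le (by rwa [norm_real, norm_neg]) hz) (norm_nonneg _) (by norm_num)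

/-- Quantitative lower bound on `Im f` near the boundary of the unit disk for the
conformal map `f(z) = (v/π) Log((1 + T w(z))/(1 - T w(z)))`, `T = tanh(Δπ/(2v))`,
`w(z) = 2z/(1+z²)`: there is `c > 0` (depending only on `Δ, v`) with
`Im f(ρ e^{iθ}) ≥ c (1-ρ) sin θ` for all `ρ ∈ [0.9, 1)` and `θ ∈ [0, π/2]`. -/
theorem im_conformal_map_lower_bound (Δ v : ℝ) (hΔ : 0 < Δ) (hv : 0 < v) :
    let f : ℂ → ℂ := fun w =>
      ((v / Real.pi : ℝ) : ℂ) *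
        Complex.log
          ((1 + ((Real.tanh (Δ * Real.pi / (2 * v)) : ℝ) : ℂ) * (2 * w / (1 + w ^ 2))) /
           (1 - ((Real.tanh (Δ * Real.pi / (2 * v)) : ℝ) : ℂ) * (2 * w / (1 + w ^ 2))))
    ∃ c : ℝ, 0 < c ∧ ∀ ρ : ℝ, 0.9 ≤ ρ → ρ < 1 → ∀ θ : ℝ, 0 ≤ θ → θ ≤ Real.pi / 2 →
      c * (1 - ρ) * Real.sin θ ≤ (f ((ρ : ℂ) * Complex.exp (θ * Complex.I))).im := by
  intro f
  set T := Real.tanh (Δ * Real.pi / (2 * v))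
  have hT : 0 < T := Real.tanh_pos (by positivity)
  refine ⟨v / Real.pi * (T / 4), by positivity, fun ρ hρ hρ1 θ hθ hθπ => ?_⟩
  set z := (ρ : ℂ) * exp (θ * I)
  have hnorm : ‖z‖ = ρ := by
    rw [norm_mul, norm_exp_ofReal_mul_I, norm_real, Real.norm_of_nonneg (by linarith), mul_one]
  have hsin : 0 ≤ Real.sin θ := Real.sin_nonneg_of_nonneg_of_le_pi hθ (by linarith [Real.pi_pos])
  set ζ := (1 + z ^ 2 + 2 * T * z) * conj (1 + z ^ 2 - 2 * T * z)
  have hζim : ζ.im = 4 * T * (1 - ρ ^ 2) * (ρ * Real.sin θ) := by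
    rw [im_mul_conj_one_add_sq_add_sub, hnorm]
    simp [z, exp_ofReal_mul_I_re, exp_ofReal_mul_I_im]
  have hζnorm : ‖ζ‖ ≤ 4 * 4 := norm_mul_conj_one_add_sq_add_sub_le
    (Real.abs_tanh_lt_one _).le (by rw [hnorm]; linarith)
  have hf : (f z).im = v / Real.pi * arg ζ := by
    simp only [f, im_ofReal_mul, log_im]
    rw [one_add_mul_div_one_sub_mul_eq _ _ (one_add_sq_ne_zero_of_norm_lt_one (hnorm.trans_lt hρ1)),
      arg_div_eq_arg_mul_conj]
  have hgap : 0 ≤ T * ((1 - ρ) * Real.sin θ) := mul_nonneg hT.le (mul_nonneg (by linarith) hsin)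
  have hlow : T / 4 * ((1 - ρ) * Real.sin θ) ≤ ζ.im / (4 * 4) := by
    rw [hζim]
    nlinarith [mul_le_mul_of_nonneg_left (by nlinarith : 1 ≤ ρ * (1 + ρ)) hgap]
  calc v / Real.pi * (T / 4) * (1 - ρ) * Real.sin θ
      = v / Real.pi * (T / 4 * ((1 - ρ) * Real.sin θ)) := by ring
    _ ≤ v / Real.pi * (ζ.im / (4 * 4)) := by gcongr
    _ ≤ v / Real.pi * arg ζ := by gcongr; exact im_div_le_arg (by linarith) hζnorm
    _ = (f z).im := hf.symm
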